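/- arXiv:2311.07425 — 4 statements merged into one kernel-verified Lean document; each statement's English description precedes it below -/
import Mathlib

section
/- Let Q ⊂ ℝⁿ be a compact controlled invariant set satisfying τ-completeness for all sufficiently small τ > 0. Then as τ approaches zero, the τ-recurrence entropy converges to the invariance entropy: lim_{τ↘0} h_rec(τ, Q) = h_inv(Q). -/
open Set Filter MeasureTheory Metric

noncomputable section

/-- The state space `ℝⁿ`. -/
abbrev Stat (n : ℕ) : Type := EuclideanSpace ℝ (Fin n)

/-- Control signals: functions of time with values in `ℝᵐ`. -/
abbrev CtrlSig (m : ℕ) : Type := ℝ → EuclideanSpace ℝ (Fin m)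

variable {n m : ℕ}

/-- `N_ε(Q) = {y | ∃ x ∈ Q, ‖x - y‖ ≤ ε}`. -/
def nbhd (Q : Set (Stat n)) (ε : ℝ) : Set (Stat n) := {y | ∃ x ∈ Q, ‖x - y‖ ≤ ε}

/-- `ξ` is the solution map of `ẋ(t) = f(x(t), u(t))`. -/
def IsSolution (f : Stat n → EuclideanSpace ℝ (Fin m) → Stat n)
    (𝒰 : Set (CtrlSig m)) (ξ : Stat n → CtrlSig m → ℝ → Stat n) : Prop :=
  ∀ x : Stat n, ∀ u ∈ 𝒰, ξ x u 0 = x ∧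
    ∀ t : ℝ, 0 ≤ t → HasDerivAt (ξ x u) (f (ξ x u t) (u t)) t

/-- Admissible control signals take values in the compact control-value set `U`. -/
def CtrlValued (𝒰 : Set (CtrlSig m)) (U : Set (EuclideanSpace ℝ (Fin m))) : Prop :=
  ∀ u ∈ 𝒰, ∀ t : ℝ, u t ∈ U

/-- The trajectory `ξ(x,u,·)` is `(T,ε,τ,Q)`-recurrent. -/
def IsRecTraj (ξ : Stat n → CtrlSig m → ℝ → Stat n) (Q : Set (Stat n))
    (T ε τ : ℝ) (x : Stat n) (u : CtrlSig m) : Prop :=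
  ∀ t : ℝ, 0 ≤ t → t ≤ T - τ → ∃ t', t ≤ t' ∧ t' ≤ t + τ ∧ ξ x u t' ∈ nbhd Q ε

/-- The trajectory `ξ(x,u,·)` is `(T,τ,Q)`-recurrent (strict case, `ε = 0`). -/
def IsRecTrajS (ξ : Stat n → CtrlSig m → ℝ → Stat n) (Q : Set (Stat n))
    (T τ : ℝ) (x : Stat n) (u : CtrlSig m) : Prop :=
  ∀ t : ℝ, 0 ≤ t → t ≤ T - τ → ∃ t', t ≤ t' ∧ t' ≤ t + τ ∧ ξ x u t' ∈ Q

/-- The trajectory `ξ(x,u,·)` is `(τ,Q)`-recurrent (`T = ∞`, `ε = 0`). -/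
def IsRecTrajInf (ξ : Stat n → CtrlSig m → ℝ → Stat n) (Q : Set (Stat n))
    (τ : ℝ) (x : Stat n) (u : CtrlSig m) : Prop :=
  ∀ t : ℝ, 0 ≤ t → ∃ t', t ≤ t' ∧ t' ≤ t + τ ∧ ξ x u t' ∈ Q

/-- The trajectory `ξ(x,u,·)` is `(T,ε,Q')`-invariant. -/
def IsInvTraj (ξ : Stat n → CtrlSig m → ℝ → Stat n) (Q' : Set (Stat n))
    (T ε : ℝ) (x : Stat n) (u : CtrlSig m) : Prop :=
  ∀ t : ℝ, 0 ≤ t → t ≤ T → ξ x u t ∈ nbhd Q' ε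

/-- The trajectory `ξ(x,u,·)` is `(T,Q')`-invariant (strict case, `ε = 0`). -/
def IsInvTrajS (ξ : Stat n → CtrlSig m → ℝ → Stat n) (Q' : Set (Stat n))
    (T : ℝ) (x : Stat n) (u : CtrlSig m) : Prop :=
  ∀ t : ℝ, 0 ≤ t → t ≤ T → ξ x u t ∈ Q'

/-- `Q` is controlled `τ`-recurrent. -/
def CtrlTauRec (ξ : Stat n → CtrlSig m → ℝ → Stat n) (𝒰 : Set (CtrlSig m))
    (Q : Set (Stat n)) (τ : ℝ) : Prop :=
  ∀ x ∈ Q, ∃ u ∈ 𝒰, IsRecTrajInf ξ Q τ x u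

/-- `Q` is controlled invariant. -/
def CtrlInv (ξ : Stat n → CtrlSig m → ℝ → Stat n) (𝒰 : Set (CtrlSig m))
    (Q : Set (Stat n)) : Prop :=
  ∀ x ∈ Q, ∃ u ∈ 𝒰, ∀ t : ℝ, 0 ≤ t → ξ x u t ∈ Q

/-- `τ`-completeness: solutions from `Q` are defined on `[0,τ]` (automatic here) and
continuous in the initial state. -/
def TauComplete (ξ : Stat n → CtrlSig m → ℝ → Stat n) (𝒰 : Set (CtrlSig m))
    (Q : Set (Stat n)) (τ : ℝ) : Prop :=
  ∀ u ∈ 𝒰, ∀ t ∈ Icc (0:ℝ) τ, ContinuousOn (fun x => ξ x u t) Q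

/-- `S` is a recurrence `(T,ε,τ,Q)`-spanning set. -/
def RecSpanning (ξ : Stat n → CtrlSig m → ℝ → Stat n) (𝒰 : Set (CtrlSig m))
    (Q : Set (Stat n)) (T ε τ : ℝ) (S : Set (CtrlSig m)) : Prop :=
  S ⊆ 𝒰 ∧ ∀ x ∈ Q, ∃ u ∈ S, IsRecTraj ξ Q T ε τ x u

/-- `S` is a recurrence `(T,τ,Q)`-spanning set (strict case). -/
def RecSpanningS (ξ : Stat n → CtrlSig m → ℝ → Stat n) (𝒰 : Set (CtrlSig m))
    (Q : Set (Stat n)) (T τ : ℝ) (S : Set (CtrlSig m)) : Prop :=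
  S ⊆ 𝒰 ∧ ∀ x ∈ Q, ∃ u ∈ S, IsRecTrajS ξ Q T τ x u

/-- `S` is an invariance `(T,ε,K,Q')`-spanning set. -/
def InvSpanning (ξ : Stat n → CtrlSig m → ℝ → Stat n) (𝒰 : Set (CtrlSig m))
    (K Q' : Set (Stat n)) (T ε : ℝ) (S : Set (CtrlSig m)) : Prop :=
  S ⊆ 𝒰 ∧ ∀ x ∈ K, ∃ u ∈ S, IsInvTraj ξ Q' T ε x u

/-- `S` is an invariance `(T,K,Q')`-spanning set (strict case). -/
def InvSpanningS (ξ : Stat n → CtrlSig m → ℝ → Stat n) (𝒰 : Set (CtrlSig m))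
    (K Q' : Set (Stat n)) (T : ℝ) (S : Set (CtrlSig m)) : Prop :=
  S ⊆ 𝒰 ∧ ∀ x ∈ K, ∃ u ∈ S, IsInvTrajS ξ Q' T x u

/-- `r_rec(T,ε,τ,Q)`: minimal cardinality of a recurrence spanning set (`⊤` if none). -/
def rRec (ξ : Stat n → CtrlSig m → ℝ → Stat n) (𝒰 : Set (CtrlSig m))
    (Q : Set (Stat n)) (T ε τ : ℝ) : ℕ∞ :=
  sInf (Set.encard '' {S | RecSpanning ξ 𝒰 Q T ε τ S})

/-- `r*_rec(T,τ,Q)`. -/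
def rRecS (ξ : Stat n → CtrlSig m → ℝ → Stat n) (𝒰 : Set (CtrlSig m))
    (Q : Set (Stat n)) (T τ : ℝ) : ℕ∞ :=
  sInf (Set.encard '' {S | RecSpanningS ξ 𝒰 Q T τ S})

/-- `r_inv(T,ε,K,Q')`. -/
def rInv (ξ : Stat n → CtrlSig m → ℝ → Stat n) (𝒰 : Set (CtrlSig m))
    (K Q' : Set (Stat n)) (T ε : ℝ) : ℕ∞ :=
  sInf (Set.encard '' {S | InvSpanning ξ 𝒰 K Q' T ε S})

/-- `r*_inv(T,K,Q')`. -/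
def rInvS (ξ : Stat n → CtrlSig m → ℝ → Stat n) (𝒰 : Set (CtrlSig m))
    (K Q' : Set (Stat n)) (T : ℝ) : ℕ∞ :=
  sInf (Set.encard '' {S | InvSpanningS ξ 𝒰 K Q' T S})

/-- Extended-real base-2 logarithm of an extended natural number. -/
def elog2 (c : ℕ∞) : EReal :=
  if c = ⊤ then (⊤ : EReal) else ((Real.logb 2 (c.toNat : ℝ) : ℝ) : EReal)

/-- `limsup_{T→∞} (1/T) log₂ r(T)` as an extended real. -/
def entLimsup (r : ℝ → ℕ∞) : EReal :=
  Filter.limsup (fun T : ℝ => ((T⁻¹ : ℝ) : EReal) * elog2 (r T)) Filter.atTop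

/-- The `τ`-recurrence entropy `h_rec(τ,Q)`; the limit as `ε ↘ 0` is realized as the
supremum over `ε > 0` since the quantity is monotone as `ε` decreases. -/
def hRec (ξ : Stat n → CtrlSig m → ℝ → Stat n) (𝒰 : Set (CtrlSig m))
    (Q : Set (Stat n)) (τ : ℝ) : EReal :=
  ⨆ ε : Ioi (0:ℝ), entLimsup (fun T => rRec ξ 𝒰 Q T (ε : ℝ) τ)

/-- The strict `τ`-recurrence entropy `h*_rec(τ,Q)`. -/
def hRecS (ξ : Stat n → CtrlSig m → ℝ → Stat n) (𝒰 : Set (CtrlSig m))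
    (Q : Set (Stat n)) (τ : ℝ) : EReal :=
  entLimsup (fun T => rRecS ξ 𝒰 Q T τ)

/-- The invariance entropy `h_inv(K,Q')`. -/
def hInv (ξ : Stat n → CtrlSig m → ℝ → Stat n) (𝒰 : Set (CtrlSig m))
    (K Q' : Set (Stat n)) : EReal :=
  ⨆ ε : Ioi (0:ℝ), entLimsup (fun T => rInv ξ 𝒰 K Q' T (ε : ℝ))

/-- The strict invariance entropy `h*_inv(K,Q')`. -/
def hInvS (ξ : Stat n → CtrlSig m → ℝ → Stat n) (𝒰 : Set (CtrlSig m))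
    (K Q' : Set (Stat n)) : EReal :=
  entLimsup (fun T => rInvS ξ 𝒰 K Q' T)

/-- `𝒰_r`: controls that make some trajectory from `Q` `(τ,Q)`-recurrent. -/
def UrSet (ξ : Stat n → CtrlSig m → ℝ → Stat n) (𝒰 : Set (CtrlSig m))
    (Q : Set (Stat n)) (τ : ℝ) : Set (CtrlSig m) :=
  {u ∈ 𝒰 | ∃ x ∈ Q, IsRecTrajInf ξ Q τ x u}

/-- `R_r(Q,τ)`: reachable set within time `τ` under controls in `𝒰_r`. -/
def RrSet (ξ : Stat n → CtrlSig m → ℝ → Stat n) (𝒰 : Set (CtrlSig m))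
    (Q : Set (Stat n)) (τ : ℝ) : Set (Stat n) :=
  {y | ∃ u ∈ UrSet ξ 𝒰 Q τ, ∃ x ∈ Q, ∃ t ∈ Icc (0:ℝ) τ, ξ x u t = y}

/-- Set of Lipschitz difference quotients of `f` over `D × U`. -/
def lipRatios (f : Stat n → EuclideanSpace ℝ (Fin m) → Stat n)
    (U : Set (EuclideanSpace ℝ (Fin m))) (D : Set (Stat n)) : Set ℝ :=
  {r | ∃ x₁ ∈ D, ∃ x₂ ∈ D, ∃ u ∈ U, x₁ ≠ x₂ ∧ r = ‖f x₁ u - f x₂ u‖ / ‖x₁ - x₂‖}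

/-- `L_τ`: max of the Lipschitz ratios over `cl(co(R_r(Q,τ))) × U`. -/
def Ltau (f : Stat n → EuclideanSpace ℝ (Fin m) → Stat n)
    (U : Set (EuclideanSpace ℝ (Fin m))) (ξ : Stat n → CtrlSig m → ℝ → Stat n)
    (𝒰 : Set (CtrlSig m)) (Q : Set (Stat n)) (τ : ℝ) : ℝ :=
  sSup (lipRatios f U (closure (convexHull ℝ (RrSet ξ 𝒰 Q τ))))

/-- Values `‖f(x,u)‖` over `Q × U`. -/
def normVals (f : Stat n → EuclideanSpace ℝ (Fin m) → Stat n)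
    (U : Set (EuclideanSpace ℝ (Fin m))) (Q : Set (Stat n)) : Set ℝ :=
  {r | ∃ x ∈ Q, ∃ u ∈ U, r = ‖f x u‖}

/-- `F_Q := sup_{x∈Q, u∈U} ‖f(x,u)‖`. -/
def FQbound (f : Stat n → EuclideanSpace ℝ (Fin m) → Stat n)
    (U : Set (EuclideanSpace ℝ (Fin m))) (Q : Set (Stat n)) : ℝ :=
  sSup (normVals f U Q)

/-- `δ_τ := F_Q τ e^{L_τ τ}`. -/
def deltaTau (f : Stat n → EuclideanSpace ℝ (Fin m) → Stat n)
    (U : Set (EuclideanSpace ℝ (Fin m))) (ξ : Stat n → CtrlSig m → ℝ → Stat n)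
    (𝒰 : Set (CtrlSig m)) (Q : Set (Stat n)) (τ : ℝ) : ℝ :=
  FQbound f U Q * τ * Real.exp (Ltau f U ξ 𝒰 Q τ * τ)

/-- `b(δ,Q)`: minimal cardinality of a `δ`-cover of `Q` by closed balls. -/
def coverNum (Q : Set (Stat n)) (δ : ℝ) : ℕ∞ :=
  sInf (Set.encard '' {C : Set (Stat n) | C.Finite ∧ Q ⊆ ⋃ c ∈ C, Metric.closedBall c δ})

/-- `div_x f(x,u) = tr ∂f/∂x(x,u)`. -/
def divf (f : Stat n → EuclideanSpace ℝ (Fin m) → Stat n)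
    (x : Stat n) (u : EuclideanSpace ℝ (Fin m)) : ℝ :=
  ∑ i : Fin n, fderiv ℝ (fun y => f y u) x (EuclideanSpace.single i (1:ℝ)) i

/-- Extended-real natural logarithm of an extended natural number. -/
def eln (c : ℕ∞) : EReal :=
  if c = ⊤ then (⊤ : EReal) else ((Real.log (c.toNat : ℝ) : ℝ) : EReal)

/-- Fractal (box-counting) dimension `dim_F(Q) = limsup_{δ↘0} ln b(δ,Q) / ln(1/δ)`. -/
def dimF (Q : Set (Stat n)) : EReal :=
  Filter.limsup (fun δ : ℝ => eln (coverNum Q δ) * (((Real.log (1/δ))⁻¹ : ℝ) : EReal))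
    (nhdsWithin 0 (Ioi 0))

end


section AuxProofs

open Set Filter Pointwise

variable {n m : ℕ}

lemma nbhd_mono {Q : Set (Stat n)} {e1 e2 : ℝ} (h : e1 ≤ e2) : nbhd Q e1 ⊆ nbhd Q e2 := by
  rintro y ⟨x, hx, hxy⟩
  exact ⟨x, hx, hxy.trans h⟩

lemma elog2_nonneg (c : ℕ∞) : 0 ≤ elog2 c := by
  unfold elog2
  split
  · exact le_top
  · rcases Nat.eq_zero_or_pos (ENat.toNat c) with h0 | hpos
    · simp [h0]
    · exact_mod_cast Real.logb_nonneg one_lt_two (by exact_mod_cast hpos)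

lemma elog2_mono : Monotone elog2 := by
  intro a b hab
  unfold elog2
  by_cases hb : b = ⊤
  · simp [hb]
  · have ha : a ≠ ⊤ := fun h => hb (top_le_iff.mp (h ▸ hab))
    rw [if_neg ha, if_neg hb]
    have hn : a.toNat ≤ b.toNat := ENat.toNat_le_toNat hab hb
    rcases Nat.eq_zero_or_pos a.toNat with h0 | hpos
    · rw [h0]
      rcases Nat.eq_zero_or_pos b.toNat with h0' | hpos'
      · rw [h0']
      · simp only [Nat.cast_zero, Real.logb_zero, EReal.coe_le_coe_iff]
        exact Real.logb_nonneg one_lt_two (by exact_mod_cast hpos')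
    · have : Real.logb 2 (a.toNat : ℝ) ≤ Real.logb 2 (b.toNat : ℝ) :=
        Real.logb_le_logb_of_le one_lt_two (by exact_mod_cast hpos) (by exact_mod_cast hn)
      exact_mod_cast this

lemma entLimsup_mono {r1 r2 : ℝ → ℕ∞} (h : ∀ᶠ T in atTop, r1 T ≤ r2 T) :
    entLimsup r1 ≤ entLimsup r2 := by
  refine Filter.limsup_le_limsup ?_
  filter_upwards [h, eventually_ge_atTop (1:ℝ)] with T hT hT1
  have hnn : (0 : EReal) ≤ ((T⁻¹ : ℝ) : EReal) :=
    EReal.coe_nonneg.mpr (inv_nonneg.mpr (by linarith))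
  exact mul_le_mul_of_nonneg_left (elog2_mono hT) hnn

/-- Continuous induction: a local forward Lipschitz-type bound propagates along an
interval. -/
lemma cont_induction {E : Type*} [NormedAddCommGroup E] (g : ℝ → E) {a b M : ℝ}
    (hcont : ∀ s ∈ Icc a b, ContinuousAt g s)
    (hstep : ∀ s ∈ Ico a b, ‖g s - g a‖ ≤ M * (s - a) →
      ∀ᶠ r in nhdsWithin s (Ioi s), ‖g r - g s‖ ≤ M * (r - s)) :
    ∀ s ∈ Icc a b, ‖g s - g a‖ ≤ M * (s - a) := by
  intro s hs
  have hsub : Icc a b ⊆ {s | ‖g s - g a‖ ≤ M * (s - a)} := by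
    apply IsClosed.Icc_subset_of_forall_exists_gt
    · have hgc : ContinuousOn (fun s => ‖g s - g a‖ - M * (s - a)) (Icc a b) := by
        have h1 : ContinuousOn g (Icc a b) := fun t ht => (hcont t ht).continuousWithinAt
        exact ((h1.sub continuousOn_const).norm).sub (by fun_prop)
      have hc : IsClosed (Icc a b ∩ (fun s => ‖g s - g a‖ - M * (s - a)) ⁻¹' Iic 0) :=
        hgc.preimage_isClosed_of_isClosed isClosed_Icc isClosed_Iic
      have heq : {s | ‖g s - g a‖ ≤ M * (s - a)} ∩ Icc a b
          = Icc a b ∩ (fun s => ‖g s - g a‖ - M * (s - a)) ⁻¹' Iic 0 := by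
        ext t
        simp only [Set.mem_inter_iff, Set.mem_setOf_eq, Set.mem_preimage, Set.mem_Iic,
          sub_nonpos, and_comm]
      rw [heq]
      exact hc
    · simp
    · rintro x ⟨hxS, hxI⟩ y hy
      have h1 := hstep x hxI hxS
      have h2 : ∀ᶠ r in nhdsWithin x (Ioi x), r ∈ Ioc x y :=
        Ioc_mem_nhdsGT hy
      obtain ⟨r, hr1, hr2⟩ := (h1.and h2).exists
      refine ⟨r, ?_, hr2⟩
      have : ‖g r - g a‖ ≤ ‖g r - g x‖ + ‖g x - g a‖ := by
        have := norm_add_le (g r - g x) (g x - g a)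
        simpa using this
      simp only [Set.mem_setOf_eq]
      have hxS' : ‖g x - g a‖ ≤ M * (x - a) := hxS
      linarith
  exact hsub hs

/-- A derivative bound gives an eventual forward difference bound. -/
lemma eventually_step {E : Type*} [NormedAddCommGroup E] [NormedSpace ℝ E]
    {g : ℝ → E} {v : E} {s M : ℝ} (hd : HasDerivAt g v s) (hv : ‖v‖ < M) :
    ∀ᶠ r in nhdsWithin s (Ioi s), ‖g r - g s‖ ≤ M * (r - s) := by
  have h := hasDerivAt_iff_isLittleO.mp hd
  have h2 := h.def (sub_pos.mpr hv)
  filter_upwards [h2.filter_mono nhdsWithin_le_nhds, self_mem_nhdsWithin] with r hr hrs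
  have hrs' : s < r := hrs
  have h3 : ‖g r - g s‖ ≤ ‖(r - s) • v‖ + (M - ‖v‖) * ‖r - s‖ := by
    calc ‖g r - g s‖ = ‖(g r - g s - (r - s) • v) + (r - s) • v‖ := by congr 1; abel
    _ ≤ ‖g r - g s - (r - s) • v‖ + ‖(r - s) • v‖ := norm_add_le _ _
    _ ≤ (M - ‖v‖) * ‖r - s‖ + ‖(r - s) • v‖ := by linarith
    _ = _ := by ring
  rw [norm_smul, Real.norm_eq_abs, abs_of_pos (sub_pos.mpr hrs')] at h3
  nlinarith [norm_nonneg v, sub_pos.mpr hrs']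

/-- Key lemma: a recurrent trajectory stays in an enlarged neighborhood. -/
lemma key_invariant {f : Stat n → EuclideanSpace ℝ (Fin m) → Stat n}
    {U : Set (EuclideanSpace ℝ (Fin m))} {𝒰 : Set (CtrlSig m)}
    {ξ : Stat n → CtrlSig m → ℝ → Stat n}
    (hval : CtrlValued 𝒰 U) (hsol : IsSolution f 𝒰 ξ)
    {Q : Set (Stat n)} {ε' M ε τ T : ℝ}
    (hM : ∀ y ∈ nbhd Q ε', ∀ v ∈ U, ‖f y v‖ < M)
    (hMpos : 0 < M) (hτ : 0 < τ) (hsum : ε + M * τ ≤ ε') (hT : τ ≤ T)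
    {x : Stat n} {u : CtrlSig m} (hu : u ∈ 𝒰)
    (hrec : IsRecTraj ξ Q T ε τ x u) : IsInvTraj ξ Q T ε' x u := by
  have hder : ∀ t : ℝ, 0 ≤ t → HasDerivAt (ξ x u) (f (ξ x u t) (u t)) t := (hsol x u hu).2
  have hcont : ∀ t : ℝ, 0 ≤ t → ContinuousAt (ξ x u) t :=
    fun t ht => (hder t ht).continuousAt
  intro t ht0 htT
  have hTτ : 0 ≤ T - τ := by linarith
  obtain ⟨t', ht'1, ht'2, ht'Q⟩ := hrec (min t (T - τ)) (le_min ht0 hTτ) (min_le_right _ _)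
  have ht'0 : 0 ≤ t' := (le_min ht0 hTτ).trans ht'1
  have habs : |t - t'| ≤ τ := by
    rcases le_total t (T - τ) with hc | hc
    · rw [min_eq_left hc] at ht'1 ht'2
      rw [abs_le]; constructor <;> linarith
    · rw [min_eq_right hc] at ht'1 ht'2
      rw [abs_le]; constructor <;> linarith
  obtain ⟨z, hzQ, hz⟩ := ht'Q
  -- main bound : ‖ξ x u t - ξ x u t'‖ ≤ M * τ
  have hbound : ‖ξ x u t - ξ x u t'‖ ≤ M * τ := by
    rcases le_total t' t with hct | hct
    · -- forward from t'
      have htt : t - t' ≤ τ := by rw [abs_le] at habs; linarith [habs.2]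
      have key := cont_induction (ξ x u) (a := t') (b := t) (M := M)
        (fun s hs => hcont s (ht'0.trans hs.1))
        (fun s hs hb => by
          have hsτ : s - t' ≤ τ := by
            have := hs.2.le
            linarith
          have hsQ : ξ x u s ∈ nbhd Q ε' := by
            refine ⟨z, hzQ, ?_⟩
            have h4 : ‖z - ξ x u s‖ ≤ ‖z - ξ x u t'‖ + ‖ξ x u t' - ξ x u s‖ := by
              have := norm_add_le (z - ξ x u t') (ξ x u t' - ξ x u s)
              simpa using this
            have h5 : ‖ξ x u t' - ξ x u s‖ = ‖ξ x u s - ξ x u t'‖ := norm_sub_rev _ _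
            have h6 : M * (s - t') ≤ M * τ := by
              apply mul_le_mul_of_nonneg_left hsτ hMpos.le
            linarith
          exact eventually_step (hder s (ht'0.trans hs.1)) (hM _ hsQ _ (hval u hu s)))
        t ⟨hct, le_refl t⟩
      calc ‖ξ x u t - ξ x u t'‖ ≤ M * (t - t') := key
      _ ≤ M * τ := mul_le_mul_of_nonneg_left htt hMpos.le
    · -- backward from t' : use reversed curve
      have htt : t' - t ≤ τ := by rw [abs_le] at habs; linarith [habs.1]
      set g2 : ℝ → Stat n := fun r => ξ x u (t + t' - r) with hg2def
      have hw : ∀ s : ℝ, s ∈ Icc t t' → 0 ≤ t + t' - s := by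
        intro s hs; have := hs.2; linarith
      have hg2a : g2 t = ξ x u t' := by simp [hg2def]
      have hg2d : ∀ s ∈ Icc t t', HasDerivAt g2
          ((-1 : ℝ) • f (ξ x u (t + t' - s)) (u (t + t' - s))) s := by
        intro s hs
        have hinner : HasDerivAt (fun r : ℝ => t + t' - r) (-1 : ℝ) s := by
          simpa using (hasDerivAt_id s).const_sub (t + t')
        exact (hder (t + t' - s) (hw s hs)).scomp_of_eq s hinner rfl
      have key := cont_induction g2 (a := t) (b := t') (M := M)
        (fun s hs => ((hcont _ (hw s hs)).comp
          ((continuous_const.sub continuous_id).continuousAt)))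
        (fun s hs hb => by
          have hsτ : s - t ≤ τ := by
            have := hs.2.le
            linarith
          have hsQ : ξ x u (t + t' - s) ∈ nbhd Q ε' := by
            refine ⟨z, hzQ, ?_⟩
            rw [hg2a] at hb
            have h4 : ‖z - g2 s‖ ≤ ‖z - ξ x u t'‖ + ‖ξ x u t' - g2 s‖ := by
              have := norm_add_le (z - ξ x u t') (ξ x u t' - g2 s)
              simpa using this
            have h5 : ‖ξ x u t' - g2 s‖ = ‖g2 s - ξ x u t'‖ := norm_sub_rev _ _
            have h6 : M * (s - t) ≤ M * τ := mul_le_mul_of_nonneg_left hsτ hMpos.le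
            have : ‖z - g2 s‖ ≤ ε' := by linarith
            simpa [hg2def] using this
          have hd2 := hg2d s ⟨hs.1, hs.2.le⟩
          have hnorm : ‖(-1 : ℝ) • f (ξ x u (t + t' - s)) (u (t + t' - s))‖ < M := by
            rw [norm_smul]
            simpa using hM _ hsQ _ (hval u hu (t + t' - s))
          exact eventually_step hd2 hnorm)
        t' ⟨hct, le_refl t'⟩
      rw [hg2a] at key
      have hg2b : g2 t' = ξ x u t := by simp [hg2def]
      rw [hg2b] at key
      calc ‖ξ x u t - ξ x u t'‖ ≤ M * (t' - t) := key
      _ ≤ M * τ := mul_le_mul_of_nonneg_left htt hMpos.le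
  refine ⟨z, hzQ, ?_⟩
  have h4 : ‖z - ξ x u t‖ ≤ ‖z - ξ x u t'‖ + ‖ξ x u t - ξ x u t'‖ := by
    have := norm_add_le (z - ξ x u t') (ξ x u t' - ξ x u t)
    rw [norm_sub_rev (ξ x u t) (ξ x u t')]
    simpa using this
  linarith

lemma rInv_le_rRec {f : Stat n → EuclideanSpace ℝ (Fin m) → Stat n}
    {U : Set (EuclideanSpace ℝ (Fin m))} {𝒰 : Set (CtrlSig m)}
    {ξ : Stat n → CtrlSig m → ℝ → Stat n}
    (hval : CtrlValued 𝒰 U) (hsol : IsSolution f 𝒰 ξ)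
    {Q : Set (Stat n)} {ε' M ε τ T : ℝ}
    (hM : ∀ y ∈ nbhd Q ε', ∀ v ∈ U, ‖f y v‖ < M)
    (hMpos : 0 < M) (hτ : 0 < τ) (hsum : ε + M * τ ≤ ε') (hT : τ ≤ T) :
    rInv ξ 𝒰 Q Q T ε' ≤ rRec ξ 𝒰 Q T ε τ := by
  apply sInf_le_sInf
  apply Set.image_mono
  rintro S ⟨hS𝒰, hspan⟩
  refine ⟨hS𝒰, fun x hx => ?_⟩
  obtain ⟨u, huS, hrec⟩ := hspan x hx
  exact ⟨u, huS, key_invariant hval hsol hM hMpos hτ hsum hT (hS𝒰 huS) hrec⟩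

lemma rRec_le_rInv {𝒰 : Set (CtrlSig m)} {ξ : Stat n → CtrlSig m → ℝ → Stat n}
    {Q : Set (Stat n)} {ε τ T : ℝ} (hτ : 0 ≤ τ) :
    rRec ξ 𝒰 Q T ε τ ≤ rInv ξ 𝒰 Q Q T ε := by
  apply sInf_le_sInf
  apply Set.image_mono
  rintro S ⟨hS𝒰, hspan⟩
  refine ⟨hS𝒰, fun x hx => ?_⟩
  obtain ⟨u, huS, hinv⟩ := hspan x hx
  exact ⟨u, huS, fun t ht htT => ⟨t, le_refl t, by linarith, hinv t ht (by linarith)⟩⟩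

end AuxProofs

open Pointwise in
/-- For a compact controlled invariant set `Q` satisfying `τ`-completeness for all
sufficiently small `τ > 0`, `lim_{τ↘0} h_rec(τ,Q) = h_inv(Q)`. -/
theorem hRec_tendsto_hInv {n m : ℕ}
    (f : Stat n → EuclideanSpace ℝ (Fin m) → Stat n)
    (U : Set (EuclideanSpace ℝ (Fin m))) (hU : IsCompact U)
    (𝒰 : Set (CtrlSig m)) (ξ : Stat n → CtrlSig m → ℝ → Stat n)
    (hf : LocallyLipschitz (Function.uncurry f))
    (hval : CtrlValued 𝒰 U) (hsol : IsSolution f 𝒰 ξ)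
    (Q : Set (Stat n)) (hQ : IsCompact Q)
    (hinv : CtrlInv ξ 𝒰 Q)
    (hcomp : ∃ τ₀ > (0:ℝ), ∀ τ ∈ Ioc (0:ℝ) τ₀, TauComplete ξ 𝒰 Q τ) :
    Filter.Tendsto (fun τ : ℝ => hRec ξ 𝒰 Q τ) (nhdsWithin 0 (Ioi 0))
      (nhds (hInv ξ 𝒰 Q Q))  := by
  classical
  -- bound on the vector field on an enlarged neighborhood
  have hbnd : ∀ ε₀ : ℝ, 0 < ε₀ → ∃ M : ℝ, 0 < M ∧
      ∀ y ∈ nbhd Q ε₀, ∀ v ∈ U, ‖f y v‖ < M := by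
    intro ε₀ hε₀
    have hKeq : nbhd Q ε₀ = Q + Metric.closedBall (0 : Stat n) ε₀ := by
      ext y
      constructor
      · rintro ⟨x, hx, hxy⟩
        refine ⟨x, hx, y - x, ?_, by module⟩
        simpa [mem_closedBall, dist_zero_right, norm_sub_rev x y] using hxy
      · rintro ⟨x, hx, z, hz, rfl⟩
        refine ⟨x, hx, ?_⟩
        simpa [norm_sub_rev] using mem_closedBall_zero_iff.mp hz
    have hK : IsCompact (nbhd Q ε₀) := by
      rw [hKeq]
      exact hQ.add (isCompact_closedBall (0 : Stat n) ε₀)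
    have hφ : Continuous fun p : Stat n × EuclideanSpace ℝ (Fin m) => ‖f p.1 p.2‖ :=
      hf.continuous.norm
    obtain ⟨M0, hM0⟩ := ((hK.prod hU).image hφ).bddAbove
    refine ⟨max M0 0 + 1, by positivity, fun y hy v hv => ?_⟩
    have : ‖f y v‖ ≤ M0 := hM0 ⟨(y, v), ⟨hy, hv⟩, rfl⟩
    have : ‖f y v‖ ≤ max M0 0 := this.trans (le_max_left _ _)
    linarith
  -- upper bound : hRec τ ≤ hInv for all τ > 0
  have h_le : ∀ τ : ℝ, 0 < τ → hRec ξ 𝒰 Q τ ≤ hInv ξ 𝒰 Q Q := by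
    intro τ hτ
    apply iSup_le
    rintro ⟨ε, hε⟩
    refine le_trans (entLimsup_mono ?_)
      (le_iSup (fun ε : Ioi (0:ℝ) => entLimsup fun T => rInv ξ 𝒰 Q Q T (ε : ℝ)) ⟨ε, hε⟩)
    exact Filter.Eventually.of_forall fun T => rRec_le_rInv hτ.le
  rw [tendsto_order]
  constructor
  · intro a ha
    rw [hInv, lt_iSup_iff] at ha
    obtain ⟨⟨ε₀, hε₀⟩, hA⟩ := ha
    have hε₀' : (0:ℝ) < ε₀ := hε₀
    obtain ⟨M, hMpos, hM⟩ := hbnd ε₀ hε₀'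
    have hmem : Ioo (0:ℝ) (ε₀ / M) ∈ nhdsWithin (0:ℝ) (Ioi 0) :=
      Ioo_mem_nhdsGT (div_pos hε₀' hMpos)
    filter_upwards [hmem] with τ hτ
    have hτpos : 0 < τ := hτ.1
    have hMτ : M * τ < ε₀ := by
      have := (lt_div_iff₀ hMpos).mp hτ.2
      linarith
    set ε : ℝ := ε₀ - M * τ with hεdef
    have hεpos : 0 < ε := by simp [hεdef]; linarith
    have hsum : ε + M * τ ≤ ε₀ := by simp [hεdef]
    have hstep : entLimsup (fun T => rInv ξ 𝒰 Q Q T ε₀) ≤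
        entLimsup (fun T => rRec ξ 𝒰 Q T ε τ) := by
      apply entLimsup_mono
      filter_upwards [eventually_ge_atTop τ] with T hT
      exact rInv_le_rRec hval hsol hM hMpos hτpos hsum hT
    refine hA.trans_le (hstep.trans ?_)
    exact le_iSup (fun ε : Ioi (0:ℝ) => entLimsup fun T => rRec ξ 𝒰 Q T (ε : ℝ) τ)
      ⟨ε, hεpos⟩
  · intro b hb
    filter_upwards [self_mem_nhdsWithin] with τ hτ
    exact lt_of_le_of_lt (h_le τ hτ) hb
end

section
/- Suppose that for each u ∈ U the map x ↦ f(x,u) is globally L-Lipschitz on ℝⁿ. Fix τ ≥ 0, ε > 0, T ≥ τ, a compact set Q ⊂ ℝⁿ, and a control u ∈ 𝒰. If ξ(x₀,u,·) is a (T,τ,Q)-recurrent trajectory and x ∈ ℝⁿ satisfies ‖x − x₀‖ ≤ ε e^{−L T}, then ξ(x,u,·) is a (T,ε,τ,Q)-recurrent trajectory. -/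
open Set Filter MeasureTheory Metric

/-- If `f(·,u)` is globally `L`-Lipschitz for each `u ∈ U`, `ξ(x₀,u,·)` is a strictly
`(T,τ,Q)`-recurrent trajectory, and `‖x - x₀‖ ≤ ε e^{-LT}`, then `ξ(x,u,·)` is a
`(T,ε,τ,Q)`-recurrent trajectory. -/
theorem recurrent_traj_of_close_start {n m : ℕ}
    (f : Stat n → EuclideanSpace ℝ (Fin m) → Stat n)
    (U : Set (EuclideanSpace ℝ (Fin m)))
    (𝒰 : Set (CtrlSig m)) (ξ : Stat n → CtrlSig m → ℝ → Stat n)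
    (hval : CtrlValued 𝒰 U) (hsol : IsSolution f 𝒰 ξ)
    (L : NNReal) (hLip : ∀ v ∈ U, LipschitzWith L (fun x => f x v))
    (τ ε T : ℝ) (hτ : 0 ≤ τ) (hε : 0 < ε) (hT : τ ≤ T)
    (Q : Set (Stat n)) (hQ : IsCompact Q)
    (u : CtrlSig m) (hu : u ∈ 𝒰) (x₀ x : Stat n)
    (hrec : IsRecTrajS ξ Q T τ x₀ u)
    (hx : ‖x - x₀‖ ≤ ε * Real.exp (-((L : ℝ) * T))) :
    IsRecTraj ξ Q T ε τ x u := by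
  intro t ht htT
  obtain ⟨t', ht1, ht2, hQt'⟩ := hrec t ht htT
  refine ⟨t', ht1, ht2, ξ x₀ u t', hQt', ?_⟩
  have ht'0 : 0 ≤ t' := le_trans ht ht1
  have ht'T : t' ≤ T := by linarith
  obtain ⟨hξ0, hξd⟩ := hsol x u hu
  obtain ⟨hξ0', hξd'⟩ := hsol x₀ u hu
  have key := dist_le_of_trajectories_ODE (v := fun s y => f y (u s)) (K := L)
    (f := ξ x u) (g := ξ x₀ u) (a := 0) (b := t') (δ := ‖x - x₀‖)
    (fun s => hLip (u s) (hval u hu s))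
    (fun s hs => ((hξd s hs.1).continuousAt).continuousWithinAt)
    (fun s hs => ((hξd s hs.1).hasDerivWithinAt))
    (fun s hs => ((hξd' s hs.1).continuousAt).continuousWithinAt)
    (fun s hs => ((hξd' s hs.1).hasDerivWithinAt))
    (by rw [hξ0, hξ0', dist_eq_norm])
    t' ⟨ht'0, le_refl t'⟩
  rw [dist_eq_norm] at key
  have hmul : ‖x - x₀‖ * Real.exp ((L : ℝ) * (t' - 0)) ≤ ε := by
    have h1 : ‖x - x₀‖ * Real.exp ((L : ℝ) * (t' - 0)) ≤
        (ε * Real.exp (-((L : ℝ) * T))) * Real.exp ((L : ℝ) * (t' - 0)) := by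
      apply mul_le_mul_of_nonneg_right hx (Real.exp_nonneg _)
    have h2 : (ε * Real.exp (-((L : ℝ) * T))) * Real.exp ((L : ℝ) * (t' - 0)) =
        ε * Real.exp ((L : ℝ) * (t' - 0) - (L : ℝ) * T) := by
      rw [mul_assoc, ← Real.exp_add]; ring_nf
    have h3 : Real.exp ((L : ℝ) * (t' - 0) - (L : ℝ) * T) ≤ 1 := by
      apply Real.exp_le_one_iff.mpr
      have : (L : ℝ) * t' ≤ (L : ℝ) * T := mul_le_mul_of_nonneg_left ht'T L.coe_nonneg
      linarith
    calc ‖x - x₀‖ * Real.exp ((L : ℝ) * (t' - 0)) ≤ _ := h1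
      _ = ε * Real.exp ((L : ℝ) * (t' - 0) - (L : ℝ) * T) := h2
      _ ≤ ε * 1 := by nlinarith [Real.exp_nonneg ((L : ℝ) * (t' - 0) - (L : ℝ) * T)]
      _ = ε := mul_one ε
  have : ‖ξ x u t' - ξ x₀ u t'‖ ≤ ε := le_trans key hmul
  rw [norm_sub_rev] at this
  exact this
end

section
/- Consider the double integrator ẋ₁ = x₂, ẋ₂ = u with control values u(t) ∈ [−1, 1], and let Q = [−1,1]². Then Q is controlled 2-recurrent: for every initial state x ∈ Q there exists an admissible (in fact, piecewise-constant) control u such that for every t ≥ 0 there exists t' ∈ [t, t+2] with the trajectory from x under u at time t' belonging to Q. -/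
open Set MeasureTheory intervalIntegral

noncomputable section

/-- The square `Q = [-1,1]²` in the plane. -/
def Qsq : Set (ℝ × ℝ) := Set.Icc ((-1 : ℝ), (-1 : ℝ)) ((1 : ℝ), (1 : ℝ))

/-- Admissible controls for the double integrator: piecewise-continuous (here: locally
interval-integrable) functions with values in `[-1,1]`. -/
def Adm : Set (ℝ → ℝ) :=
  {u | (∀ t : ℝ, u t ∈ Set.Icc (-1 : ℝ) 1) ∧ ∀ a b : ℝ, IntervalIntegrable u volume a b}

/-- The closed-form solution of the double integrator `ẋ₁ = x₂, ẋ₂ = u` from `x`. -/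
def diTraj (x : ℝ × ℝ) (u : ℝ → ℝ) (t : ℝ) : ℝ × ℝ :=
  (x.1 + x.2 * t + ∫ s in (0:ℝ)..t, ∫ r in (0:ℝ)..s, u r,
   x.2 + ∫ s in (0:ℝ)..t, u s)

/-- Square-wave control: value `c * (-1)^⌊t/2⌋`. -/
def sqw (c : ℝ) (t : ℝ) : ℝ := c * (-1 : ℝ) ^ (⌊t / 2⌋)

lemma neg_one_zpow_abs (k : ℤ) : |(-1 : ℝ) ^ k| = 1 := by
  rcases Int.even_or_odd k with h | h
  · rw [h.neg_one_zpow]; simp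
  · rw [h.neg_one_zpow]; simp

lemma sqw_measurable (c : ℝ) : Measurable (sqw c) := by
  apply Measurable.mul measurable_const
  exact Measurable.comp (measurable_from_top) (Int.measurable_floor.comp (by fun_prop))

lemma sqw_abs (c t : ℝ) : |sqw c t| = |c| := by
  rw [sqw, abs_mul, neg_one_zpow_abs, mul_one]

lemma sqw_intervalIntegrable (c : ℝ) (a b : ℝ) :
    IntervalIntegrable (sqw c) volume a b := by
  refine (_root_.intervalIntegrable_const (c := |c|)).mono_fun'
    ((sqw_measurable c).aestronglyMeasurable.restrict) ?_
  filter_upwards with t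
  simp [Real.norm_eq_abs, sqw_abs]

lemma floor_eq_of_mem (n : ℕ) {r : ℝ} (h1 : 2 * n < r) (h2 : r < 2 * n + 2) :
    ⌊r / 2⌋ = n := by
  rw [Int.floor_eq_iff]
  constructor
  · push_cast; linarith
  · push_cast; linarith

/-- On a step interval the integral of the square wave is linear. -/
lemma sqw_step (c : ℝ) (n : ℕ) {s : ℝ} (h1 : 2 * n ≤ s) (h2 : s ≤ 2 * n + 2) :
    ∫ r in (2 * n : ℝ)..s, sqw c r = c * (-1) ^ n * (s - 2 * n) := by
  have : ∫ r in (2 * n : ℝ)..s, sqw c r = ∫ r in (2 * n : ℝ)..s, c * (-1 : ℝ) ^ n := by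
    apply intervalIntegral.integral_congr_ae
    have hne : ∀ᵐ r : ℝ, r ≠ 2 * n + 2 := by
      rw [MeasureTheory.ae_iff]
      simpa using measure_singleton ((2 : ℝ) * n + 2)
    filter_upwards [hne] with r hr hmem
    rw [Set.uIoc_of_le (by linarith), Set.mem_Ioc] at hmem
    have hlt : r < 2 * n + 2 := lt_of_le_of_ne (le_trans hmem.2 h2) hr
    rw [sqw, floor_eq_of_mem n hmem.1 hlt]
    norm_num
  rw [this, intervalIntegral.integral_const, smul_eq_mul]
  ring

lemma sqw_even (c : ℝ) (n : ℕ) :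
    (∫ s in (0:ℝ)..(2 * n), sqw c s) = c * (1 - (-1) ^ n) ∧
    (∫ s in (0:ℝ)..(2 * n), ∫ r in (0:ℝ)..s, sqw c r) = 2 * c * n := by
  induction n with
  | zero => simp
  | succ n ih =>
    have hint := sqw_intervalIntegrable c
    have hVcont : Continuous (fun s : ℝ => ∫ r in (0:ℝ)..s, sqw c r) :=
      intervalIntegral.continuous_primitive hint 0
    have hsplit : ∀ f : ℝ → ℝ, (∀ a b : ℝ, IntervalIntegrable f volume a b) →
        (∫ s in (0:ℝ)..(2 * (n:ℝ) + 2), f s) =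
        (∫ s in (0:ℝ)..(2 * (n:ℝ)), f s) + ∫ s in (2 * (n:ℝ))..(2 * (n:ℝ) + 2), f s := by
      intro f hf
      rw [← intervalIntegral.integral_add_adjacent_intervals (hf 0 (2*n)) (hf (2*n) (2*n+2))]
    have hcast : (2 : ℝ) * ((n : ℝ) + 1) = 2 * (n:ℝ) + 2 := by ring
    constructor
    · push_cast
      rw [hcast, hsplit _ hint]
      push_cast at ih
      rw [ih.1, sqw_step c n (by linarith) (le_refl _)]
      ring
    · push_cast
      rw [hcast, hsplit _ (fun a b => (hVcont.intervalIntegrable a b))]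
      push_cast at ih
      rw [ih.2]
      have heq : ∫ s in (2 * (n:ℝ))..(2 * (n:ℝ) + 2), (∫ r in (0:ℝ)..s, sqw c r) =
          ∫ s in (2 * (n:ℝ))..(2 * (n:ℝ) + 2),
            (c * (1 - (-1) ^ n) + c * (-1) ^ n * (s - 2 * n)) := by
        apply intervalIntegral.integral_congr
        intro s hs
        dsimp only
        rw [Set.uIcc_of_le (by linarith), Set.mem_Icc] at hs
        rw [← intervalIntegral.integral_add_adjacent_intervals (hint 0 (2*n)) (hint (2*n) s)]
        rw [ih.1, sqw_step c n hs.1 hs.2]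
      rw [heq]
      have h1 : IntervalIntegrable (fun _ : ℝ => c * (1 - (-1:ℝ) ^ n)) volume (2*n) (2*(n:ℝ)+2) :=
        _root_.intervalIntegrable_const
      have h2 : IntervalIntegrable (fun s : ℝ => c * (-1:ℝ) ^ n * (s - 2 * n)) volume (2*n) (2*(n:ℝ)+2) :=
        (Continuous.intervalIntegrable (by continuity) _ _)
      rw [intervalIntegral.integral_add h1 h2, intervalIntegral.integral_const]
      have h3 : ∫ s in (2 * (n:ℝ))..(2 * (n:ℝ) + 2), (c * (-1:ℝ) ^ n * (s - 2 * n)) =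
          c * (-1:ℝ) ^ n * ∫ s in (2 * (n:ℝ))..(2 * (n:ℝ) + 2), (s - 2 * n) := by
        rw [← intervalIntegral.integral_const_mul]
      rw [h3, intervalIntegral.integral_sub (Continuous.intervalIntegrable (by continuity) _ _)
        _root_.intervalIntegrable_const, integral_id, intervalIntegral.integral_const]
      simp only [smul_eq_mul]
      ring

/-- For the double integrator with `U = [-1,1]`, the square `Q = [-1,1]²` is controlled
`2`-recurrent: from every `x ∈ Q` there is an admissible control whose trajectory visits
`Q` at least once in every time interval of length `2`. -/
theorem double_integrator_two_recurrent :
    ∀ x ∈ Qsq, ∃ u ∈ Adm, ∀ t : ℝ, 0 ≤ t →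
      ∃ t', t ≤ t' ∧ t' ≤ t + 2 ∧ diTraj x u t' ∈ Qsq := by
  rintro ⟨x₁, x₂⟩ hx
  rw [Qsq, Set.mem_Icc] at hx
  obtain ⟨⟨h1, h2⟩, ⟨h3, h4⟩⟩ := hx
  dsimp only at h1 h2 h3 h4
  refine ⟨sqw (-x₂), ⟨?_, sqw_intervalIntegrable _⟩, ?_⟩
  · intro t
    rw [Set.mem_Icc, ← abs_le]
    rw [sqw_abs, abs_neg, abs_le]
    exact ⟨h2, h4⟩
  · intro t ht
    set n : ℕ := ⌈t / 2⌉₊ with hn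
    refine ⟨2 * n, ?_, ?_, ?_⟩
    · have := Nat.le_ceil (t / 2)
      
      linarith
    · have : (⌈t / 2⌉₊ : ℝ) < t / 2 + 1 := Nat.ceil_lt_add_one (by linarith)
      linarith
    · have h := sqw_even (-x₂) n
      rw [diTraj, h.1, h.2, Qsq, Set.mem_Icc]
      constructor <;> constructor <;> simp only []
      · nlinarith []
      · rcases Int.even_or_odd (n:ℤ) with he | he
        · have : Even n := by exact_mod_cast (Int.even_coe_nat n).mp he
          rw [this.neg_one_pow]; linarith
        · have : Odd n := by exact_mod_cast (Int.odd_coe_nat n).mp he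
          rw [this.neg_one_pow]; linarith
      · nlinarith []
      · rcases Int.even_or_odd (n:ℤ) with he | he
        · have : Even n := by exact_mod_cast (Int.even_coe_nat n).mp he
          rw [this.neg_one_pow]; linarith
        · have : Odd n := by exact_mod_cast (Int.odd_coe_nat n).mp he
          rw [this.neg_one_pow]; linarith

end
end

section
/- Suppose that for each u ∈ U the map x ↦ f(x,u) is globally L-Lipschitz on ℝⁿ. Fix τ > 0, α ≥ 0, ε > 0, an initial state x₀ ∈ ℝⁿ, and sequences (x_i), (q_i) in ℝⁿ and (u_i) in 𝒰 such that ‖x_i − q_i‖ ≤ ε e^{−((i+1)α + L)τ} and x_{i+1} = ξ(x_i, u_i, τ) for all i ∈ ℕ, with x₀ given. Define û : [0,∞) → U by û(t) := u_i(t − iτ) for i = ⌊t/τ⌋, and ξ̂ : [0,∞) → ℝⁿ by ξ̂(t) := ξ(q_i, u_i, t − iτ) for i = ⌊t/τ⌋. Then for every i ∈ ℕ, x_{i+1} ∈ B(ξ(q_i, u_i, τ), ε e^{−(i+1)ατ}), and for every t ≥ 0, ‖ξ̂(t) − ξ(x₀, û, t)‖ ≤ ε e^{−αt}. -/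
open Set Filter MeasureTheory Metric

noncomputable section

/-- Concatenation of the controls `u_i` over consecutive intervals `[iτ,(i+1)τ)`:
`û(t) = u_{⌊t/τ⌋}(t - ⌊t/τ⌋ τ)`. -/
def concatCtrl {m : ℕ} (τ : ℝ) (u : ℕ → CtrlSig m) : CtrlSig m :=
  fun t => u (⌊t / τ⌋).toNat (t - ((⌊t / τ⌋).toNat : ℝ) * τ)

/-- The simulated piecewise trajectory `ξ̂(t) = ξ(q_{⌊t/τ⌋}, u_{⌊t/τ⌋}, t - ⌊t/τ⌋ τ)`. -/
def concatTraj {n m : ℕ} (ξ : Stat n → CtrlSig m → ℝ → Stat n) (τ : ℝ)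
    (q : ℕ → Stat n) (u : ℕ → CtrlSig m) : ℝ → Stat n :=
  fun t => ξ (q (⌊t / τ⌋).toNat) (u (⌊t / τ⌋).toNat) (t - ((⌊t / τ⌋).toNat : ℝ) * τ)

/-! By Grönwall's inequality, solutions driven by the same control separate by at most the
factor `e^{Lt}`, so the quantization error `ε e^{−((i+1)α+L)τ}` grows over one sampling period
to at most `ε e^{−(i+1)ατ}`, which is `≤ ε e^{−αt}` for `t ≤ (i+1)τ`. On `[iτ, (i+1)τ]` the
true trajectory under `û` is, by uniqueness of solutions, the solution from `x_i` under `u_i`,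
while `ξ̂` is the one from `q_i`; so both claims reduce to this one-period estimate. -/

theorem exists_nat_mul_add_of_nonneg {τ t : ℝ} (hτ : 0 < τ) (ht : 0 ≤ t) :
    ∃ i : ℕ, ∃ s ∈ Ico 0 τ, t = i * τ + s := by
  refine ⟨⌊t / τ⌋₊, t - ⌊t / τ⌋₊ * τ, ⟨?_, ?_⟩, by ring⟩
  · have := Nat.floor_le (div_nonneg ht hτ.le)
    rw [le_div_iff₀ hτ] at this
    linarith
  · have := Nat.lt_floor_add_one (t / τ)
    rw [div_lt_iff₀ hτ] at this
    linarith

theorem floor_div_toNat_nat_mul_add {τ s : ℝ} (hτ : 0 < τ) (i : ℕ) (hs : s ∈ Ico 0 τ) :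
    (⌊((i : ℝ) * τ + s) / τ⌋).toNat = i := by
  have hfrac : ⌊s / τ⌋ = 0 :=
    Int.floor_eq_zero_iff.2 ⟨div_nonneg hs.1 hτ.le, (div_lt_one hτ).2 hs.2⟩
  rw [add_div, mul_div_cancel_right₀ _ hτ.ne', Int.floor_natCast_add, hfrac, add_zero,
    Int.toNat_natCast]

theorem concatCtrl_nat_mul_add {m : ℕ} {τ s : ℝ} (hτ : 0 < τ) (u : ℕ → CtrlSig m) (i : ℕ)
    (hs : s ∈ Ico 0 τ) : concatCtrl τ u (i * τ + s) = u i s := by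
  simp only [concatCtrl, floor_div_toNat_nat_mul_add hτ i hs, add_sub_cancel_left]

theorem concatTraj_nat_mul_add {n m : ℕ} (ξ : Stat n → CtrlSig m → ℝ → Stat n) {τ s : ℝ}
    (hτ : 0 < τ) (q : ℕ → Stat n) (u : ℕ → CtrlSig m) (i : ℕ) (hs : s ∈ Ico 0 τ) :
    concatTraj ξ τ q u (i * τ + s) = ξ (q i) (u i) s := by
  simp only [concatTraj, floor_div_toNat_nat_mul_add hτ i hs, add_sub_cancel_left]

namespace IsSolution

variable {n m : ℕ} {f : Stat n → EuclideanSpace ℝ (Fin m) → Stat n} {𝒰 : Set (CtrlSig m)}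
  {ξ : Stat n → CtrlSig m → ℝ → Stat n} {L : NNReal}

theorem norm_sub_le (hsol : IsSolution f 𝒰 ξ) {u : CtrlSig m} (hu : u ∈ 𝒰)
    (hLip : ∀ s, LipschitzWith L fun y => f y (u s)) (a b : Stat n) {t : ℝ} (ht : 0 ≤ t) :
    ‖ξ a u t - ξ b u t‖ ≤ ‖a - b‖ * Real.exp (L * t) := by
  obtain ⟨ha₀, ha⟩ := hsol a u hu
  obtain ⟨hb₀, hb⟩ := hsol b u hu
  have := dist_le_of_trajectories_ODE (v := fun s y => f y (u s)) hLip
    (fun s hs => (ha s hs.1).continuousAt.continuousWithinAt)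
    (fun s hs => (ha s hs.1).hasDerivWithinAt)
    (fun s hs => (hb s hs.1).continuousAt.continuousWithinAt)
    (fun s hs => (hb s hs.1).hasDerivWithinAt)
    (by rw [ha₀, hb₀]) t ⟨ht, le_rfl⟩
  simpa only [dist_eq_norm, sub_zero] using this

theorem apply_add_eqOn (hsol : IsSolution f 𝒰 ξ) {u v : CtrlSig m} (hu : u ∈ 𝒰) (hv : v ∈ 𝒰)
    (hLip : ∀ s, LipschitzWith L fun y => f y (v s)) {t₀ τ : ℝ} (ht₀ : 0 ≤ t₀)
    (huv : ∀ s ∈ Ico 0 τ, u (t₀ + s) = v s) (x : Stat n) :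
    EqOn (fun s => ξ x u (t₀ + s)) (ξ (ξ x u t₀) v) (Icc 0 τ) := by
  have hshift : ∀ s, 0 ≤ s →
      HasDerivAt (fun r => ξ x u (t₀ + r)) (f (ξ x u (t₀ + s)) (u (t₀ + s))) s :=
    fun s hs => ((hsol x u hu).2 _ (by linarith)).comp_const_add _ _
  obtain ⟨hy₀, hy⟩ := hsol (ξ x u t₀) v hv
  refine ODE_solution_unique (v := fun s y => f y (v s)) hLip
    (fun s hs => (hshift s hs.1).continuousAt.continuousWithinAt)
    (fun s hs => ?_)
    (fun s hs => (hy s hs.1).continuousAt.continuousWithinAt)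
    (fun s hs => (hy s hs.1).hasDerivWithinAt)
    (by simp only [add_zero, hy₀])
  simpa only [huv s hs] using (hshift s hs.1).hasDerivWithinAt

theorem apply_concatCtrl_nat_mul_add (hsol : IsSolution f 𝒰 ξ) {τ : ℝ} (hτ : 0 < τ)
    {u : ℕ → CtrlSig m} (hu : ∀ i, u i ∈ 𝒰) (huhat : concatCtrl τ u ∈ 𝒰)
    (hLip : ∀ i s, LipschitzWith L fun y => f y (u i s))
    {x : ℕ → Stat n} (hstep : ∀ i, x (i + 1) = ξ (x i) (u i) τ) (i : ℕ) :
    EqOn (fun s => ξ (x 0) (concatCtrl τ u) (i * τ + s)) (ξ (x i) (u i)) (Icc 0 τ) := by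
  have hrestart (i : ℕ) := hsol.apply_add_eqOn huhat (hu i) (hLip i) (by positivity)
    (fun s hs => concatCtrl_nat_mul_add hτ u i hs) (x 0)
  have hnode : ∀ i : ℕ, ξ (x 0) (concatCtrl τ u) (i * τ) = x i := by
    intro i
    induction i with
    | zero => simpa using (hsol (x 0) _ huhat).1
    | succ i ih =>
      have := hrestart i ⟨hτ.le, le_rfl⟩
      simp only [ih] at this
      rw [hstep, ← this]
      push_cast
      ring_nf
  simpa only [hnode] using hrestart i

end IsSolution

/-- **Accuracy invariant of the quantized-sensing algorithm.** If the quantization error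
satisfies `‖x_i − q_i‖ ≤ ε e^{−((i+1)α+L)τ}` and `x_{i+1} = ξ(x_i,u_i,τ)`, then
`x_{i+1} ∈ B(ξ(q_i,u_i,τ), ε e^{−(i+1)ατ})` for every `i`, and
`‖ξ̂(t) − ξ(x₀,û,t)‖ ≤ ε e^{−αt}` for every `t ≥ 0`. -/
theorem algorithm_accuracy_invariant {n m : ℕ}
    (f : Stat n → EuclideanSpace ℝ (Fin m) → Stat n)
    (U : Set (EuclideanSpace ℝ (Fin m)))
    (𝒰 : Set (CtrlSig m)) (ξ : Stat n → CtrlSig m → ℝ → Stat n)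
    (hval : CtrlValued 𝒰 U) (hsol : IsSolution f 𝒰 ξ)
    (L : NNReal) (hLip : ∀ v ∈ U, LipschitzWith L (fun x => f x v))
    (τ α ε : ℝ) (hτ : 0 < τ) (hα : 0 ≤ α) (hε : 0 < ε)
    (x₀ : Stat n) (x q : ℕ → Stat n) (u : ℕ → CtrlSig m)
    (hu : ∀ i : ℕ, u i ∈ 𝒰) (huhat : concatCtrl τ u ∈ 𝒰)
    (hx0 : x 0 = x₀)
    (hquant : ∀ i : ℕ, ‖x i - q i‖ ≤ ε * Real.exp (-((((i : ℝ) + 1) * α + (L : ℝ)) * τ)))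
    (hstep : ∀ i : ℕ, x (i + 1) = ξ (x i) (u i) τ) :
    (∀ i : ℕ, x (i + 1) ∈
        Metric.closedBall (ξ (q i) (u i) τ) (ε * Real.exp (-(((i : ℝ) + 1) * α * τ)))) ∧
    ∀ t : ℝ, 0 ≤ t →
      ‖concatTraj ξ τ q u t - ξ x₀ (concatCtrl τ u) t‖ ≤ ε * Real.exp (-(α * t)) := by
  have hLipu (i : ℕ) (s : ℝ) : LipschitzWith L fun y => f y (u i s) := hLip _ (hval _ (hu i) s)
  have hperiod : ∀ i : ℕ, ∀ s ∈ Icc 0 τ,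
      ‖ξ (x i) (u i) s - ξ (q i) (u i) s‖ ≤ ε * Real.exp (-(((i : ℝ) + 1) * α * τ)) := by
    intro i s hs
    calc ‖ξ (x i) (u i) s - ξ (q i) (u i) s‖
        ≤ ‖x i - q i‖ * Real.exp (L * s) := hsol.norm_sub_le (hu i) (hLipu i) _ _ hs.1
      _ ≤ ε * Real.exp (-((((i : ℝ) + 1) * α + L) * τ)) * Real.exp (L * τ) := by
          gcongr
          exacts [hquant i, hs.2]
      _ = ε * Real.exp (-(((i : ℝ) + 1) * α * τ)) := by
          rw [mul_assoc, ← Real.exp_add]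
          ring_nf
  refine ⟨fun i => ?_, fun t ht => ?_⟩
  · rw [mem_closedBall, dist_eq_norm, hstep]
    exact hperiod i τ ⟨hτ.le, le_rfl⟩
  · obtain ⟨i, s, hs, rfl⟩ := exists_nat_mul_add_of_nonneg hτ ht
    have htrue : ξ (x 0) (concatCtrl τ u) (i * τ + s) = ξ (x i) (u i) s :=
      hsol.apply_concatCtrl_nat_mul_add hτ hu huhat hLipu hstep i (Ico_subset_Icc_self hs)
    rw [concatTraj_nat_mul_add ξ hτ q u i hs, ← hx0, htrue, norm_sub_rev]
    calc _ ≤ ε * Real.exp (-(((i : ℝ) + 1) * α * τ)) := hperiod i s (Ico_subset_Icc_self hs)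
      _ ≤ ε * Real.exp (-(α * (i * τ + s))) := by
          gcongr ε * Real.exp ?_
          nlinarith [hs.2]
end
end
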